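/- arXiv:1911.05632 — 4 statements merged into one kernel-verified Lean document; each statement's English description precedes it below -/
import Mathlib

section
/- Let Ω be an unbounded domain in ℂⁿ. If there exists a bounded holomorphic function f on Ω which never takes the value zero and satisfies f(z) → 0 as ‖z‖ → ∞, then Ω is Kobayashi hyperbolic. -/
/-!
Fix `p ∈ Ω` and a neighbourhood of `p` on which `‖f‖ ≥ η > 0`, and let `M` bound `‖f‖` strictly.
If `g : Δ_r → Ω` is a holomorphic disk through a point `q` of that neighbourhood, then `f ∘ g`
has a logarithm `φ`, and Harnack's inequality for the negative harmonic function
`Re φ - log M` gives `‖f ∘ g‖ ≥ η³ / M²` on `Δ_{r/2}`. By the decay of `f`, `g` maps `Δ_{r/2}`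
into a ball of radius `R` independent of `g`, so Cauchy's estimate gives `‖g'(0)‖ ≤ 4R / r`,
that is, `k_Ω(q; v) ≥ ‖v‖ / (4R)`.
-/

open Metric Set

noncomputable def kob {E : Type*} [NormedAddCommGroup E] [NormedSpace ℂ E]
    (Ω : Set E) (z v : E) : ℝ :=
  sInf {c : ℝ | ∃ r : ℝ, 0 < r ∧ c = 1 / r ∧ ∃ f : ℂ → E,
    DifferentiableOn ℂ f (ball (0 : ℂ) r) ∧ f 0 = z ∧ deriv f 0 = v ∧
    MapsTo f (ball (0 : ℂ) r) Ω}

/-- A set `Ω` is Kobayashi hyperbolic if around every point the Kobayashi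
pseudometric admits a positive lower bound comparable to the norm. -/
def KobayashiHyperbolic {E : Type*} [NormedAddCommGroup E] [NormedSpace ℂ E]
    (Ω : Set E) : Prop :=
  ∀ p ∈ Ω, ∃ U ∈ nhds p, ∃ c > 0, ∀ q ∈ U ∩ Ω, ∀ v : E, c * ‖v‖ ≤ kob Ω q v

/-- Sub-mean value inequality on all closed disks contained in `S`. -/
def SubmeanOn (u : ℂ → ℝ) (S : Set ℂ) : Prop :=
  ∀ c : ℂ, ∀ s : ℝ, 0 < s → closedBall c s ⊆ S →
    u c ≤ (2 * Real.pi)⁻¹ *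
      ∫ θ in (0 : ℝ)..(2 * Real.pi), u (c + (s : ℂ) * Complex.exp ((θ : ℂ) * Complex.I))

def SubharmonicOn (u : ℂ → ℝ) (S : Set ℂ) : Prop :=
  UpperSemicontinuousOn u S ∧ SubmeanOn u S

/-- Plurisubharmonic: upper semicontinuous and subharmonic on every complex line. -/
def PSHOn {E : Type*} [NormedAddCommGroup E] [NormedSpace ℂ E]
    (u : E → ℝ) (Ω : Set E) : Prop :=
  UpperSemicontinuousOn u Ω ∧
    ∀ a b : E, SubmeanOn (fun lam : ℂ => u (a + lam • b)) {lam : ℂ | a + lam • b ∈ Ω}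

namespace Complex

open ComplexConjugate

theorem exists_exp_eq_of_differentiableOn_ball {h : ℂ → ℂ} {c : ℂ} {r : ℝ}
    (hd : DifferentiableOn ℂ h (ball c r)) (hne : ∀ z ∈ ball c r, h z ≠ 0) :
    ∃ φ : ℂ → ℂ, DifferentiableOn ℂ φ (ball c r) ∧ ∀ z ∈ ball c r, exp (φ z) = h z := by
  rcases (ball c r).eq_empty_or_nonempty with hempty | ⟨z₀, hz₀⟩
  · exact ⟨0, by simp [hempty], by simp [hempty]⟩
  have hc : c ∈ ball c r := mem_ball_self (pos_of_mem_ball hz₀)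
  have hlogDeriv : DifferentiableOn ℂ (fun z => deriv h z / h z) (ball c r) :=
    (hd.analyticOnNhd isOpen_ball).deriv.differentiableOn.div hd hne
  obtain ⟨φ, hφc, hφ⟩ := hlogDeriv.isExactOn_ball.with_val_at c (log (h c))
  have hderiv_zero : ∀ z ∈ ball c r, HasDerivAt (fun w => h w * exp (-φ w)) 0 z := by
    intro z hz
    have hh : HasDerivAt h (deriv h z) z :=
      (hd.differentiableAt (isOpen_ball.mem_nhds hz)).hasDerivAt
    have he : HasDerivAt (fun w => exp (-φ w)) (exp (-φ z) * -(deriv h z / h z)) z :=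
      (hφ z hz).neg.cexp
    refine (hh.mul he).congr_deriv ?_
    linear_combination -exp (-φ z) * mul_div_cancel₀ (deriv h z) (hne z hz)
  refine ⟨φ, fun z hz => (hφ z hz).differentiableAt.differentiableWithinAt, fun z hz => ?_⟩
  have hconst := isOpen_ball.is_const_of_deriv_eq_zero (convex_ball c r).isPreconnected
    (fun w hw => (hderiv_zero w hw).differentiableAt.differentiableWithinAt)
    (fun w hw => (hderiv_zero w hw).deriv) hz hc
  rw [hφc, exp_neg, exp_neg, exp_log (hne c hc),
    mul_inv_cancel₀ (hne c hc)] at hconst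
  field_simp at hconst
  exact hconst.symm

theorem norm_sub_lt_norm_add_conj {w w₀ : ℂ} (hw : w.re < 0) (hw₀ : w₀.re < 0) :
    ‖w - w₀‖ < ‖w + conj w₀‖ := by
  rw [norm_def, norm_def]
  refine Real.sqrt_lt_sqrt (normSq_nonneg _) ?_
  simp only [normSq_apply, sub_re, sub_im, add_re, add_im, conj_re, conj_im]
  nlinarith [mul_pos (neg_pos.2 hw) (neg_pos.2 hw₀)]

theorem three_mul_re_le_of_norm_sub_le {w w₀ : ℂ} (hw : w.re < 0)
    (h : ‖w - w₀‖ ≤ ‖w + conj w₀‖ / 2) : 3 * w₀.re ≤ w.re := by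
  have hsq := mul_self_le_mul_self (norm_nonneg _) h
  rw [div_mul_div_comm, norm_mul_self_eq_normSq, norm_mul_self_eq_normSq] at hsq
  simp only [normSq_apply, sub_re, sub_im, add_re, add_im, conj_re, conj_im] at hsq
  nlinarith [sq_nonneg (w.im - w₀.im)]

/-- Harnack's inequality for `Re φ` on the half disk, via the Schwarz lemma applied to the map
`(φ - φ c) / (φ + conj (φ c))` of the left half-plane onto the unit disk. -/
theorem three_mul_re_le_re_of_re_neg {φ : ℂ → ℂ} {c z : ℂ} {r : ℝ}
    (hd : DifferentiableOn ℂ φ (ball c r)) (hneg : ∀ w ∈ ball c r, (φ w).re < 0)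
    (hz : z ∈ ball c (r / 2)) : 3 * (φ c).re ≤ (φ z).re := by
  have hr : 0 < r := by linarith [pos_of_mem_ball hz]
  have hc : (φ c).re < 0 := hneg c (mem_ball_self hr)
  have hden : ∀ w ∈ ball c r, 0 < ‖φ w + conj (φ c)‖ := fun w hw =>
    (norm_nonneg _).trans_lt (norm_sub_lt_norm_add_conj (hneg w hw) hc)
  set ψ : ℂ → ℂ := fun w => (φ w - φ c) / (φ w + conj (φ c)) with hψ
  have hψd : DifferentiableOn ℂ ψ (ball c r) :=
    (hd.sub_const _).div (hd.add_const _) fun w hw => norm_pos_iff.1 (hden w hw)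
  have hψc : ψ c = 0 := by simp [hψ]
  have hψmaps : MapsTo ψ (ball c r) (closedBall (ψ c) 1) := by
    intro w hw
    rw [mem_closedBall, hψc, dist_zero_right, hψ, norm_div, div_le_one (hden w hw)]
    exact (norm_sub_lt_norm_add_conj (hneg w hw) hc).le
  have hzr : z ∈ ball c r := ball_subset_ball (by linarith) hz
  have hschwarz : ‖ψ z‖ ≤ 1 / 2 := by
    have := dist_le_div_mul_dist_of_mapsTo_ball hψd hψmaps hzr
    rw [hψc, dist_zero_right] at this
    calc ‖ψ z‖ ≤ 1 / r * dist z c := this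
      _ ≤ 1 / r * (r / 2) := by gcongr; exact (mem_ball.1 hz).le
      _ = 1 / 2 := by field_simp
  refine three_mul_re_le_of_norm_sub_le (hneg z hzr) ?_
  rw [hψ, norm_div, div_le_iff₀ (hden z hzr)] at hschwarz
  linarith

theorem norm_pow_three_le_of_norm_lt {h : ℂ → ℂ} {c z : ℂ} {r M : ℝ}
    (hd : DifferentiableOn ℂ h (ball c r)) (hne : ∀ w ∈ ball c r, h w ≠ 0)
    (hM : ∀ w ∈ ball c r, ‖h w‖ < M) (hz : z ∈ ball c (r / 2)) :
    ‖h c‖ ^ 3 ≤ M ^ 2 * ‖h z‖ := by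
  have hr : 0 < r := by linarith [pos_of_mem_ball hz]
  have hzr : z ∈ ball c r := ball_subset_ball (by linarith) hz
  have hcr : c ∈ ball c r := mem_ball_self hr
  have hpos : ∀ w ∈ ball c r, 0 < ‖h w‖ := fun w hw => norm_pos_iff.2 (hne w hw)
  have hMpos : 0 < M := (hpos c hcr).trans (hM c hcr)
  obtain ⟨φ, hφd, hφ⟩ := exists_exp_eq_of_differentiableOn_ball hd hne
  have hre : ∀ w ∈ ball c r, (φ w - Real.log M).re = Real.log ‖h w‖ - Real.log M := by
    intro w hw
    rw [sub_re, ofReal_re, ← hφ w hw, norm_exp, Real.log_exp]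
  have harnack := three_mul_re_le_re_of_re_neg (hφd.sub_const (Real.log M : ℂ))
    (fun w hw => by rw [hre w hw, sub_neg]; exact Real.log_lt_log (hpos w hw) (hM w hw)) hz
  rw [hre c hcr, hre z hzr] at harnack
  rw [← Real.log_le_log_iff (pow_pos (hpos c hcr) 3) (mul_pos (pow_pos hMpos 2) (hpos z hzr)),
    Real.log_pow, Real.log_mul (pow_pos hMpos 2).ne' (hpos z hzr).ne', Real.log_pow]
  push_cast
  linarith

end Complex

theorem le_kob {E : Type*} [NormedAddCommGroup E] [NormedSpace ℂ E] {Ω : Set E}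
    (hΩ : IsOpen Ω) {q : E} (hq : q ∈ Ω) (v : E) {b : ℝ}
    (h : ∀ r > 0, ∀ g : ℂ → E, DifferentiableOn ℂ g (ball 0 r) → g 0 = q → deriv g 0 = v →
      MapsTo g (ball 0 r) Ω → b ≤ 1 / r) :
    b ≤ kob Ω q v := by
  obtain ⟨ε, hε, hεΩ⟩ := Metric.isOpen_iff.1 hΩ q hq
  have hr : 0 < ε / (‖v‖ + 1) := by positivity
  have hline : HasDerivAt (fun t : ℂ => q + t • v) v 0 := by
    simpa using ((hasDerivAt_id (0 : ℂ)).smul_const v).const_add q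
  refine le_csInf ⟨_, ε / (‖v‖ + 1), hr, rfl, fun t => q + t • v,
    (differentiable_const q |>.add (differentiable_id.smul_const v)).differentiableOn,
    by simp, hline.deriv, fun t ht => hεΩ ?_⟩ ?_
  · rw [mem_ball_zero_iff] at ht
    rw [mem_ball_iff_norm, add_sub_cancel_left, norm_smul]
    calc ‖t‖ * ‖v‖ ≤ ε / (‖v‖ + 1) * ‖v‖ := by gcongr
      _ < ε := by rw [div_mul_eq_mul_div, div_lt_iff₀ (by positivity)]; nlinarith
  · rintro _ ⟨r, hr, rfl, g, hg, hg0, hgv, hgΩ⟩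
    exact h r hr g hg hg0 hgv hgΩ

theorem norm_deriv_le_of_norm_lt_of_decay {E : Type*} [NormedAddCommGroup E]
    [NormedSpace ℂ E] {Ω : Set E} {f : E → ℂ} {g : ℂ → E} {M η R r : ℝ}
    (hf : DifferentiableOn ℂ f Ω) (hne : ∀ z ∈ Ω, f z ≠ 0) (hM : ∀ z ∈ Ω, ‖f z‖ < M)
    (hη : 0 ≤ η) (hdecay : ∀ z ∈ Ω, R ≤ ‖z‖ → ‖f z‖ < η ^ 3 / M ^ 2)
    (hr : 0 < r) (hg : DifferentiableOn ℂ g (ball 0 r)) (hgΩ : MapsTo g (ball 0 r) Ω)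
    (hg0 : η ≤ ‖f (g 0)‖) :
    ‖deriv g 0‖ ≤ 4 * R / r := by
  have hhalf : ball (0 : ℂ) (r / 2) ⊆ ball 0 r := ball_subset_ball (by linarith)
  have hMpos : 0 < M := (norm_nonneg _).trans_lt (hM _ (hgΩ (mem_ball_self hr)))
  have hlow : ∀ t ∈ ball (0 : ℂ) (r / 2), η ^ 3 / M ^ 2 ≤ ‖f (g t)‖ := fun t ht => by
    rw [div_le_iff₀' (by positivity)]
    exact (pow_le_pow_left₀ hη hg0 3).trans <| Complex.norm_pow_three_le_of_norm_lt
      (hf.comp hg hgΩ) (fun t ht => hne _ (hgΩ ht)) (fun t ht => hM _ (hgΩ ht)) ht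
  have hsmall : ∀ t ∈ ball (0 : ℂ) (r / 2), ‖g t‖ < R := fun t ht =>
    not_le.1 fun hR => (hlow t ht).not_gt (hdecay _ (hgΩ (hhalf ht)) hR)
  have hmaps : MapsTo g (ball 0 (r / 2)) (closedBall (g 0) (2 * R)) := fun t ht => by
    rw [mem_closedBall, dist_eq_norm]
    linarith [norm_sub_le (g t) (g 0), hsmall t ht, hsmall 0 (mem_ball_self (half_pos hr))]
  calc ‖deriv g 0‖ ≤ 2 * R / (r / 2) :=
        Complex.norm_deriv_le_div_of_mapsTo_ball (hg.mono hhalf) hmaps (half_pos hr)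
    _ = 4 * R / r := by field_simp; ring

theorem stmt_1_general {n : ℕ} (Ω : Set (EuclideanSpace ℂ (Fin n)))
    (hopen : IsOpen Ω)
    (f : EuclideanSpace ℂ (Fin n) → ℂ)
    (hf : DifferentiableOn ℂ f Ω)
    (hbdd : ∃ M : ℝ, ∀ z ∈ Ω, ‖f z‖ ≤ M)
    (hne : ∀ z ∈ Ω, f z ≠ 0)
    (hdecay : ∀ ε > 0, ∃ R : ℝ, ∀ z ∈ Ω, R ≤ ‖z‖ → ‖f z‖ < ε) :
    KobayashiHyperbolic Ω := by
  obtain ⟨M, hM⟩ := hbdd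
  intro p hp
  set η := ‖f p‖ / 2
  have hη : 0 < η := by have := hne p hp; positivity
  have hM' : ∀ z ∈ Ω, ‖f z‖ < M + 1 := fun z hz => (hM z hz).trans_lt (lt_add_one M)
  have hM'pos : 0 < M + 1 := (norm_nonneg _).trans_lt (hM' p hp)
  obtain ⟨R, hR⟩ := hdecay (η ^ 3 / (M + 1) ^ 2) (by positivity)
  have hU : {q | η ≤ ‖f q‖} ∈ nhds p :=
    ((hf.continuousOn.continuousAt (hopen.mem_nhds hp)).norm.eventually
      (eventually_gt_nhds (half_lt_self (norm_pos_iff.2 (hne p hp))))).mono fun _ => le_of_lt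
  refine ⟨_, hU, 1 / (4 * max R 1), by positivity, fun q ⟨hqU, hqΩ⟩ v =>
    le_kob hopen hqΩ v fun r hr g hg hg0 hgv hgΩ => ?_⟩
  have hv := norm_deriv_le_of_norm_lt_of_decay hf hne hM' hη.le
    (fun z hz hRz => hR z hz ((le_max_left R 1).trans hRz)) hr hg hgΩ (hg0 ▸ hqU)
  rw [hgv] at hv
  calc 1 / (4 * max R 1) * ‖v‖ ≤ 1 / (4 * max R 1) * (4 * max R 1 / r) := by gcongr
    _ = 1 / r := by field_simp

/-- If an unbounded domain in ℂⁿ carries a bounded nonvanishing holomorphic function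
decaying to 0 at infinity, then it is Kobayashi hyperbolic. -/
theorem stmt_1 {n : ℕ} (Ω : Set (EuclideanSpace ℂ (Fin n)))
    (hopen : IsOpen Ω) (hconn : IsConnected Ω)
    (hunbounded : ¬ Bornology.IsBounded Ω)
    (f : EuclideanSpace ℂ (Fin n) → ℂ)
    (hf : DifferentiableOn ℂ f Ω)
    (hbdd : ∃ M : ℝ, ∀ z ∈ Ω, ‖f z‖ ≤ M)
    (hne : ∀ z ∈ Ω, f z ≠ 0)
    (hdecay : ∀ ε > 0, ∃ R : ℝ, ∀ z ∈ Ω, R ≤ ‖z‖ → ‖f z‖ < ε) :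
    KobayashiHyperbolic Ω :=
  stmt_1_general Ω hopen f hf hbdd hne hdecay
end

section
/- Let {c(n)}_{n ≥ 0} be an increasing sequence of positive real numbers. Then there exists a strictly convex C^∞ function ρ : [0,∞) → [0,∞) with ρ'(0) = 0 such that for every n ≥ 0 and every t ∈ (n, n+1], ρ(t) > c(n). In particular ρ(t) → ∞ as t → ∞. -/
open Metric Set

open Set Function Filter
open scoped Topology

namespace Stmt6

variable (c : ℕ → ℝ)

/-- exponent helper: `m n = n + ⌈c (n+2)⌉₊ + 2`. -/
noncomputable def mm (n : ℕ) : ℕ := n + ⌈c (n + 2)⌉₊ + 2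

/-- coefficient of the `n`-th extra term. -/
noncomputable def cc (n : ℕ) : ℝ := c (n + 2) / ((n + 1 : ℕ) : ℝ) ^ (2 * mm c n)

/-- scalar coefficients of the power series. -/
noncomputable def aa (j : ℕ) : ℝ :=
  (if j = 0 then c 0 else 0) + (if j = 2 then 1 else 0) +
    ∑' n, if j = 2 * mm c n then cc c n else 0

variable {c}

lemma mm_ge (n : ℕ) : n + 2 ≤ mm c n := by unfold mm; omega

lemma mm_sm (hc : StrictMono c) : StrictMono (mm c) := by
  intro a b hab
  have h1 : ⌈c (a + 2)⌉₊ ≤ ⌈c (b + 2)⌉₊ := Nat.ceil_mono (hc.monotone (by omega))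
  unfold mm; omega

lemma two_mm_inj (hc : StrictMono c) : Injective (fun n => 2 * mm c n) := by
  intro a b hab
  have h : 2 * mm c a = 2 * mm c b := hab
  exact (mm_sm hc).injective (by omega)

lemma cc_pos (hcpos : ∀ n, 0 < c n) (n : ℕ) : 0 < cc c n := by
  unfold cc
  exact div_pos (hcpos _) (pow_pos (by positivity) _)

lemma aa_eval (hc : StrictMono c) (n : ℕ) : aa c (2 * mm c n) = cc c n := by
  unfold aa
  have h0 : 2 * mm c n ≠ 0 := by have := mm_ge (c := c) n; omega
  have h2 : 2 * mm c n ≠ 2 := by have := mm_ge (c := c) n; omega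
  rw [if_neg h0, if_neg h2]
  have h3 : ∀ n' : ℕ, (if 2 * mm c n = 2 * mm c n' then cc c n' else 0)
      = (if n' = n then cc c n' else 0) := by
    intro n'
    by_cases h : n' = n
    · subst h; simp
    · rw [if_neg (fun hh => h (two_mm_inj hc hh.symm)), if_neg h]
  rw [tsum_congr h3, tsum_eq_single n (fun b hb => if_neg hb)]
  simp

lemma aa_out {j : ℕ} (hj0 : j ≠ 0) (hj2 : j ≠ 2) (hj : ∀ n, j ≠ 2 * mm c n) :
    aa c j = 0 := by
  unfold aa
  rw [if_neg hj0, if_neg hj2]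
  have : ∀ n : ℕ, (if j = 2 * mm c n then cc c n else 0) = 0 := fun n => if_neg (hj n)
  rw [tsum_congr this, tsum_zero]
  simp

lemma aa_one : aa c 1 = 0 :=
  aa_out one_ne_zero (by norm_num) (fun n => by have := mm_ge (c := c) n; omega)

/-- the key estimate making the series entire. -/
lemma term_bound (hcpos : ∀ n, 0 < c n) {n : ℕ} {s : ℝ} (hs : 2 * |s| ≤ (n + 1 : ℕ)) :
    |cc c n * s ^ (2 * mm c n)| ≤ (1/4 : ℝ) ^ n := by
  have hn1 : (0:ℝ) < ((n + 1 : ℕ) : ℝ) := by positivity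
  have habs : |cc c n * s ^ (2 * mm c n)| =
      c (n + 2) * (|s| / ((n + 1 : ℕ) : ℝ)) ^ (2 * mm c n) := by
    rw [abs_mul, abs_of_pos (cc_pos hcpos n), abs_pow, cc, div_pow]
    ring
  rw [habs]
  have hK : c (n + 2) ≤ (4:ℝ) ^ (⌈c (n+2)⌉₊) := by
    refine (Nat.le_ceil (c (n+2))).trans ?_
    exact_mod_cast (Nat.lt_pow_self (n := ⌈c (n+2)⌉₊) (by norm_num : 1 < 4)).le
  have hhalf : |s| / ((n + 1 : ℕ) : ℝ) ≤ 1/2 := by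
    rw [div_le_iff₀ hn1]; linarith
  have hpow : (|s| / ((n + 1 : ℕ) : ℝ)) ^ (2 * mm c n) ≤ (1/2 : ℝ) ^ (2 * mm c n) := by
    refine pow_le_pow_left₀ (by positivity) hhalf _
  have h14 : ((1:ℝ)/2) ^ (2 * mm c n) = (1/4 : ℝ) ^ (mm c n) := by
    rw [pow_mul]; norm_num
  have hmm : mm c n = n + ⌈c (n+2)⌉₊ + 2 := rfl
  calc c (n + 2) * (|s| / ((n + 1 : ℕ) : ℝ)) ^ (2 * mm c n)
      ≤ (4:ℝ) ^ (⌈c (n+2)⌉₊) * (1/2 : ℝ) ^ (2 * mm c n) := by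
        refine mul_le_mul hK hpow (by positivity) (by positivity)
    _ = (4:ℝ) ^ (⌈c (n+2)⌉₊) * ((1/4 : ℝ) ^ n * (1/4 : ℝ) ^ (⌈c (n+2)⌉₊) * (1/4 : ℝ)^2) := by
        rw [h14, hmm, pow_add, pow_add]
    _ = (1/4 : ℝ) ^ n * ((4 * (1/4 : ℝ)) ^ (⌈c (n+2)⌉₊) * (1/4 : ℝ)^2) := by
        rw [mul_pow]; ring
    _ ≤ (1/4 : ℝ) ^ n * 1 := by
        rw [mul_le_mul_iff_right₀ (by positivity)]
        norm_num
    _ = (1/4 : ℝ) ^ n := mul_one _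

lemma summable_cc (hcpos : ∀ n, 0 < c n) (t : ℝ) :
    Summable (fun n => cc c n * t ^ (2 * mm c n)) := by
  rw [← summable_nat_add_iff ⌈2 * |t|⌉₊]
  have hgeo : Summable (fun n : ℕ => ((1:ℝ)/4) ^ (n + ⌈2 * |t|⌉₊)) := by
    simp_rw [pow_add]
    exact (summable_geometric_of_lt_one (by norm_num) (by norm_num)).mul_right _
  refine Summable.of_norm_bounded hgeo ?_
  intro n
  refine term_bound hcpos ?_
  have h1 : 2 * |t| ≤ (⌈2 * |t|⌉₊ : ℝ) := Nat.le_ceil _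
  have h2 : ((⌈2 * |t|⌉₊ : ℕ) : ℝ) ≤ ((n + ⌈2 * |t|⌉₊ + 1 : ℕ) : ℝ) := by
    exact_mod_cast by omega
  linarith

end Stmt6

section PS2
namespace Stmt6

open FormalMultilinearSeries in
noncomputable def pser (c : ℕ → ℝ) : FormalMultilinearSeries ℝ ℝ ℝ :=
  FormalMultilinearSeries.ofScalars ℝ (aa c)

noncomputable def rho (c : ℕ → ℝ) : ℝ → ℝ := (pser c).sum

variable {c : ℕ → ℝ}

lemma split (hc : StrictMono c) (hcpos : ∀ n, 0 < c n) (x : ℝ) :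
    Summable (fun j => aa c j * x ^ j) ∧
      ∑' j, aa c j * x ^ j = c 0 + x ^ 2 + ∑' n, cc c n * x ^ (2 * mm c n) := by
  set e0 : ℕ → ℝ := fun j => (if j = 0 then c 0 else 0) * x ^ j with he0
  set e2 : ℕ → ℝ := fun j => (if j = 2 then (1:ℝ) else 0) * x ^ j with he2
  set e3 : ℕ → ℝ := fun j => (∑' n, if j = 2 * mm c n then cc c n else 0) * x ^ j with he3
  have hfe : ∀ j, aa c j * x ^ j = e0 j + e2 j + e3 j := by
    intro j; simp only [he0, he2, he3, aa]; ring
  have se0 : Summable e0 := by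
    refine summable_of_ne_finset_zero (s := {0}) fun j hj => ?_
    simp only [Finset.mem_singleton] at hj
    simp [he0, if_neg hj]
  have se2 : Summable e2 := by
    refine summable_of_ne_finset_zero (s := {2}) fun j hj => ?_
    simp only [Finset.mem_singleton] at hj
    simp [he2, if_neg hj]
  have te0 : ∑' j, e0 j = c 0 := by
    rw [tsum_eq_single 0 (fun j hj => by simp [he0, if_neg hj])]
    simp [he0]
  have te2 : ∑' j, e2 j = x ^ 2 := by
    rw [tsum_eq_single 2 (fun j hj => by simp [he2, if_neg hj])]
    simp [he2]
  have hsupp : ∀ j ∉ Set.range (fun n => 2 * mm c n), e3 j = 0 := by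
    intro j hj
    have : ∀ n : ℕ, (if j = 2 * mm c n then cc c n else 0) = 0 := by
      intro n
      refine if_neg fun h => hj ⟨n, h.symm⟩
    simp only [he3, tsum_congr this, tsum_zero, zero_mul]
  have hcomp : ∀ n : ℕ, e3 (2 * mm c n) = cc c n * x ^ (2 * mm c n) := by
    intro n
    simp only [he3]
    congr 1
    have h3 : ∀ n' : ℕ, (if 2 * mm c n = 2 * mm c n' then cc c n' else 0)
        = (if n' = n then cc c n' else 0) := by
      intro n'
      by_cases h : n' = n
      · subst h; simp
      · rw [if_neg (fun hh => h (two_mm_inj hc hh.symm)), if_neg h]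
    rw [tsum_congr h3, tsum_eq_single n (fun b hb => if_neg hb)]
    simp
  have scomp : Summable (e3 ∘ (fun n => 2 * mm c n)) := by
    have : (e3 ∘ (fun n => 2 * mm c n)) = fun n => cc c n * x ^ (2 * mm c n) :=
      funext fun n => hcomp n
    rw [this]
    exact summable_cc hcpos x
  have se3 : Summable e3 := ((two_mm_inj hc).summable_iff hsupp).1 scomp
  have te3 : ∑' j, e3 j = ∑' n, cc c n * x ^ (2 * mm c n) := by
    have h := (((two_mm_inj hc).hasSum_iff hsupp).2 se3.hasSum).tsum_eq
    rw [← h]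
    exact tsum_congr hcomp
  constructor
  · rw [funext hfe]
    exact (se0.add se2).add se3
  · rw [funext hfe, Summable.tsum_add (se0.add se2) se3, Summable.tsum_add se0 se2, te0, te2, te3]

lemma aa_nonneg (hcpos : ∀ n, 0 < c n) (j : ℕ) : 0 ≤ aa c j := by
  unfold aa
  have h1 : (0:ℝ) ≤ if j = 0 then c 0 else 0 := by
    split
    · exact (hcpos 0).le
    · exact le_refl 0
  have h2 : (0:ℝ) ≤ if j = 2 then (1:ℝ) else 0 := by positivity
  have h3 : (0:ℝ) ≤ ∑' n, (if j = 2 * mm c n then cc c n else 0) := by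
    refine tsum_nonneg fun n => ?_
    split
    · exact (cc_pos hcpos n).le
    · exact le_refl 0
  linarith

lemma pser_radius (hc : StrictMono c) (hcpos : ∀ n, 0 < c n) : (pser c).radius = ⊤ := by
  refine FormalMultilinearSeries.radius_eq_top_of_summable_norm _ fun r => ?_
  have heq : (fun j => ‖pser c j‖ * (r:ℝ) ^ j) = fun j => aa c j * (r:ℝ) ^ j := by
    funext j
    rw [pser, FormalMultilinearSeries.ofScalars_norm, Real.norm_eq_abs,
      abs_of_nonneg (aa_nonneg hcpos j)]
  rw [heq]
  exact (split hc hcpos (r:ℝ)).1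

end Stmt6
end PS2

section PS3
namespace Stmt6
open Set Filter

variable {c : ℕ → ℝ}

noncomputable def SS (c : ℕ → ℝ) (t : ℝ) : ℝ := ∑' n, cc c n * t ^ (2 * mm c n)

lemma rho_eq (hc : StrictMono c) (hcpos : ∀ n, 0 < c n) (x : ℝ) :
    rho c x = c 0 + x ^ 2 + SS c x := by
  have h : rho c x = ∑' j, aa c j • x ^ j :=
    FormalMultilinearSeries.ofScalars_sum_eq (aa c) x
  simp only [smul_eq_mul] at h
  rw [h, (split hc hcpos x).2, SS]

lemma hball (hc : StrictMono c) (hcpos : ∀ n, 0 < c n) :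
    HasFPowerSeriesOnBall (rho c) (pser c) 0 ⊤ :=
  pser_radius hc hcpos ▸ (pser c).hasFPowerSeriesOnBall
    (by rw [pser_radius hc hcpos]; exact ENNReal.zero_lt_top)

lemma rho_contDiff (hc : StrictMono c) (hcpos : ∀ n, 0 < c n) : ContDiff ℝ (⊤ : ℕ∞) (rho c) := by
  have h : AnalyticOnNhd ℝ (rho c) Set.univ := fun x _ =>
    (hball hc hcpos).analyticAt_of_mem (by simp [EMetric.mem_ball, edist_lt_top])
  exact h.contDiff

lemma rho_deriv (hc : StrictMono c) (hcpos : ∀ n, 0 < c n) : deriv (rho c) 0 = 0 := by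
  have h := (hball hc hcpos).hasFPowerSeriesAt.deriv
  rw [h]
  have : pser c 1 (fun _ => (1:ℝ)) = aa c 1 • (1:ℝ) ^ 1 :=
    FormalMultilinearSeries.ofScalars_apply_eq (aa c) 1 1
  rw [this, aa_one]
  simp

lemma SS_nonneg (hcpos : ∀ n, 0 < c n) {t : ℝ} (ht : 0 ≤ t) : 0 ≤ SS c t :=
  tsum_nonneg fun n => mul_nonneg (cc_pos hcpos n).le (pow_nonneg ht _)

lemma SS_convex (hc : StrictMono c) (hcpos : ∀ n, 0 < c n) :
    ConvexOn ℝ (Ici (0:ℝ)) (SS c) := by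
  refine ⟨convex_Ici 0, fun x hx y hy a b ha hb hab => ?_⟩
  simp only [smul_eq_mul]
  have hterm : ∀ n : ℕ, cc c n * (a * x + b * y) ^ (2 * mm c n) ≤
      a * (cc c n * x ^ (2 * mm c n)) + b * (cc c n * y ^ (2 * mm c n)) := by
    intro n
    have h := ((convexOn_pow (2 * mm c n)).smul (cc_pos hcpos n).le).2 hx hy ha hb hab
    simpa [smul_eq_mul] using h
  have hsz : Summable (fun n => cc c n * (a * x + b * y) ^ (2 * mm c n)) :=
    summable_cc hcpos _
  have hsx : Summable (fun n => a * (cc c n * x ^ (2 * mm c n))) :=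
    (summable_cc hcpos x).mul_left a
  have hsy : Summable (fun n => b * (cc c n * y ^ (2 * mm c n))) :=
    (summable_cc hcpos y).mul_left b
  calc SS c (a * x + b * y)
      ≤ ∑' n, (a * (cc c n * x ^ (2 * mm c n)) + b * (cc c n * y ^ (2 * mm c n))) :=
        Summable.tsum_le_tsum hterm hsz (hsx.add hsy)
    _ = a * SS c x + b * SS c y := by
        rw [Summable.tsum_add hsx hsy, (summable_cc hcpos x).tsum_mul_left a,
          (summable_cc hcpos y).tsum_mul_left b, SS, SS]

lemma SS_single (hcpos : ∀ n, 0 < c n) (n : ℕ) {t : ℝ} (ht : 0 ≤ t) :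
    cc c n * t ^ (2 * mm c n) ≤ SS c t :=
  Summable.le_tsum (summable_cc hcpos t) n
    (fun j _ => mul_nonneg (cc_pos hcpos j).le (pow_nonneg ht _))

lemma rho_strictConvex (hc : StrictMono c) (hcpos : ∀ n, 0 < c n) :
    StrictConvexOn ℝ (Ici (0:ℝ)) (rho c) := by
  have hfun : rho c = fun t => (fun s : ℝ => c 0 + s ^ 2) t + SS c t := by
    funext t
    rw [rho_eq hc hcpos t]
  rw [hfun]
  have h1 : StrictConvexOn ℝ (Ici (0:ℝ)) (fun s : ℝ => c 0 + s ^ 2) := by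
    have := (strictConvexOn_pow (le_refl 2)).add_const (c 0)
    convert this using 1
    · rfl
    · funext s; simp [add_comm]
  exact h1.add_convexOn (SS_convex hc hcpos)

lemma rho_gt (hc : StrictMono c) (hcpos : ∀ n, 0 < c n) (n : ℕ) (t : ℝ)
    (h1 : (n : ℝ) < t) (h2 : t ≤ (n : ℝ) + 1) : c n < rho c t := by
  have ht0 : (0:ℝ) < t := lt_of_le_of_lt (Nat.cast_nonneg n) h1
  rw [rho_eq hc hcpos t]
  rcases Nat.eq_zero_or_pos n with rfl | hn
  · have hS := SS_nonneg hcpos ht0.le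
    have : (0:ℝ) < t ^ 2 := by positivity
    simp only [Nat.cast_zero] at *
    linarith
  · obtain ⟨N, rfl⟩ : ∃ N, n = N + 1 := ⟨n - 1, by omega⟩
    have hcast : ((N + 1 : ℕ) : ℝ) = (N : ℝ) + 1 := by push_cast; ring
    have hterm : c (N + 2) ≤ cc c N * t ^ (2 * mm c N) := by
      have hpos : (0:ℝ) < ((N + 1 : ℕ) : ℝ) := by positivity
      have hdiv : 1 ≤ t / ((N + 1 : ℕ) : ℝ) := by
        rw [le_div_iff₀ hpos]
        rw [hcast] at h1 ⊢
        linarith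
      have hpow : 1 ≤ (t / ((N + 1 : ℕ) : ℝ)) ^ (2 * mm c N) := one_le_pow₀ hdiv
      have heq : cc c N * t ^ (2 * mm c N) =
          c (N + 2) * (t / ((N + 1 : ℕ) : ℝ)) ^ (2 * mm c N) := by
        rw [cc, div_pow]; ring
      rw [heq]
      nlinarith [hcpos (N + 2)]
    have hS : cc c N * t ^ (2 * mm c N) ≤ SS c t := SS_single hcpos N ht0.le
    have hmono : c (N + 1) < c (N + 2) := hc (by omega)
    have hsq : (0:ℝ) ≤ t ^ 2 := by positivity
    have hc0 := hcpos 0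
    linarith

lemma rho_tendsto (hc : StrictMono c) (hcpos : ∀ n, 0 < c n) :
    Tendsto (rho c) atTop atTop := by
  refine tendsto_atTop_mono' atTop ?_ tendsto_id
  filter_upwards [eventually_ge_atTop (1:ℝ)] with t ht
  have h1 : (0:ℝ) ≤ t := by linarith
  have := SS_nonneg hcpos h1
  have hc0 := hcpos 0
  have : t ≤ t ^ 2 := by nlinarith
  rw [id_eq, rho_eq hc hcpos t]
  have := SS_nonneg hcpos h1
  linarith

end Stmt6
end PS3

/-- Given an increasing sequence of positive numbers c(n), there is a smooth
strictly convex function ρ : [0,∞) → [0,∞) with ρ'(0) = 0 such that ρ(t) > c(n)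
for t ∈ (n, n+1]; in particular ρ(t) → ∞ as t → ∞. -/
theorem stmt_6 (c : ℕ → ℝ) (hc : StrictMono c) (hcpos : ∀ n, 0 < c n) :
    ∃ ρ : ℝ → ℝ,
      ContDiff ℝ (⊤ : ℕ∞) ρ ∧
      StrictConvexOn ℝ (Set.Ici (0 : ℝ)) ρ ∧
      deriv ρ 0 = 0 ∧
      (∀ t : ℝ, 0 ≤ t → 0 ≤ ρ t) ∧
      (∀ n : ℕ, ∀ t : ℝ, (n : ℝ) < t → t ≤ (n : ℝ) + 1 → c n < ρ t) ∧
      Filter.Tendsto ρ Filter.atTop Filter.atTop := by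
  refine ⟨Stmt6.rho c, Stmt6.rho_contDiff hc hcpos, Stmt6.rho_strictConvex hc hcpos,
    Stmt6.rho_deriv hc hcpos, ?_, Stmt6.rho_gt hc hcpos, Stmt6.rho_tendsto hc hcpos⟩
  intro t ht
  rw [Stmt6.rho_eq hc hcpos t]
  have h1 := Stmt6.SS_nonneg (c := c) hcpos ht
  have h2 := (hcpos 0).le
  have h3 : (0:ℝ) ≤ t ^ 2 := by positivity
  linarith
end

section
/- (Bloch's theorem, form used) There exists a universal constant 0 < θ < 1 such that: for every r > 0 and every holomorphic function f : Δ_r(0) → ℂ with |f'(0)| = 1, there exist b ∈ ℂ and a holomorphic function g : Δ_{θr}(b) → Δ_r(0) with f(g(λ)) = λ for all λ ∈ Δ_{θr}(b). -/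
open Metric Set

/-! Maximising `(r/2 - ‖z‖) * ‖f' z‖` over the closed disk of radius `r/2` yields a point `p`, at
distance `t` from the boundary of that disk, with `t * ‖f' p‖ ≥ r/2` and `‖f'‖ ≤ 2 ‖f' p‖` on the
disk of radius `t/2` about `p`. The Schwarz lemma applied to `f'` keeps `f'` within `‖f' p‖/2` of
`f' p` on a smaller disk about `p`, so there `f` expands distances by at least `‖f' p‖/2`. The
open mapping argument (a lower bound for `‖f z - f p‖` on a circle) then puts a disk of radius
comparable to `t * ‖f' p‖ ≥ r/2` in the image, on which the inverse of `f` is holomorphic since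
`f'` does not vanish. -/

open Filter Function Topology

theorem exists_mem_closedBall_le_two_mul_on_ball {α : Type*} [PseudoMetricSpace α]
    [ProperSpace α] {φ : α → ℝ} {c : α} {R : ℝ} (hR : 0 ≤ R)
    (hφ : ContinuousOn φ (closedBall c R)) (hφ₀ : ∀ z ∈ closedBall c R, 0 ≤ φ z) :
    ∃ p ∈ closedBall c R, R * φ c ≤ (R - dist p c) * φ p ∧
      ∀ z ∈ ball p ((R - dist p c) / 2), φ z ≤ 2 * φ p := by
  have hu : ContinuousOn (fun z => (R - dist z c) * φ z) (closedBall c R) :=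
    ((continuous_const.sub (continuous_id.dist continuous_const)).continuousOn).mul hφ
  obtain ⟨p, hp, hmax⟩ := (isCompact_closedBall c R).exists_isMaxOn
    ⟨c, mem_closedBall_self hR⟩ hu
  refine ⟨p, hp, by simpa using hmax (mem_closedBall_self hR), fun z hz => ?_⟩
  set t := R - dist p c
  rw [mem_ball] at hz
  have ht : 0 < t := by linarith [dist_nonneg (x := z) (y := p)]
  have hz_far : t / 2 < R - dist z c := by linarith [dist_triangle z p c]
  have hz_mem : z ∈ closedBall c R := by rw [mem_closedBall]; linarith
  have hz_max : (R - dist z c) * φ z ≤ t * φ p := hmax hz_mem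
  have : t / 2 * φ z ≤ t / 2 * (2 * φ p) := by
    nlinarith [mul_le_mul_of_nonneg_right hz_far.le (hφ₀ z hz_mem)]
  exact le_of_mul_le_mul_left this (half_pos ht)

theorem dist_le_of_norm_le_two_mul_on_ball {φ : ℂ → ℂ} {p z : ℂ} {s : ℝ}
    (hd : DifferentiableOn ℂ φ (ball p s)) (hφ : ∀ z ∈ ball p s, ‖φ z‖ ≤ 2 * ‖φ p‖)
    (hz : z ∈ ball p s) : dist (φ z) (φ p) ≤ 3 * ‖φ p‖ / s * dist z p := by
  refine Complex.dist_le_div_mul_dist_of_mapsTo_ball hd (fun w hw => ?_) hz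
  rw [mem_closedBall, dist_eq_norm]
  linarith [norm_sub_le (φ w) (φ p), hφ w hw]

theorem Convex.mul_dist_le_dist_of_norm_deriv_sub_le {𝕜 G : Type*} [RCLike 𝕜]
    [NormedAddCommGroup G] [NormedSpace 𝕜 G] {f f' : 𝕜 → G} {s : Set 𝕜} (hs : Convex ℝ s)
    (hf : ∀ z ∈ s, HasDerivWithinAt f (f' z) s z) {c : G} {ε : ℝ}
    (hε : ∀ z ∈ s, ‖f' z - c‖ ≤ ε) {x y : 𝕜} (hx : x ∈ s) (hy : y ∈ s) :
    (‖c‖ - ε) * dist x y ≤ dist (f x) (f y) := by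
  have hg : ∀ z ∈ s, HasDerivWithinAt (fun z => f z - z • c) (f' z - c) s z := fun z hz => by
    simpa using (hf z hz).fun_sub ((hasDerivWithinAt_id z s).smul_const c)
  have hmv := hs.norm_image_sub_le_of_norm_hasDerivWithin_le hg hε hy hx
  have hsplit : f x - x • c - (f y - y • c) = (f x - f y) - (x - y) • c := by
    rw [sub_smul]; abel
  rw [hsplit] at hmv
  have hrev := norm_sub_norm_le ((x - y) • c) (f x - f y)
  rw [norm_sub_rev ((x - y) • c), norm_smul] at hrev
  rw [dist_eq_norm, dist_eq_norm]
  nlinarith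

theorem ball_subset_image_closedBall_of_mul_dist_le {f : ℂ → ℂ} {p : ℂ} {ρ κ : ℝ}
    (hρ : 0 < ρ) (hκ : 0 < κ) (hf : DiffContOnCl ℂ f (ball p ρ))
    (hlip : ∀ z ∈ closedBall p ρ, κ * dist z p ≤ dist (f z) (f p)) :
    ball (f p) (κ * ρ / 2) ⊆ f '' closedBall p ρ := by
  refine hf.ball_subset_image_closedBall hρ (fun z hz => ?_) ?_
  · simpa [← dist_eq_norm, mem_sphere.mp hz] using hlip z (sphere_subset_closedBall hz)
  · have hne : ∀ᶠ z in 𝓝[≠] p, f z ≠ f p := by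
      filter_upwards [nhdsWithin_le_nhds (closedBall_mem_nhds p hρ), self_mem_nhdsWithin]
        with z hz hzp
      exact dist_pos.mp ((mul_pos hκ (dist_pos.mpr hzp)).trans_le (hlip z hz))
    exact hne.frequently.filter_mono nhdsWithin_le_nhds

theorem exists_differentiableOn_rightInverse_of_mul_dist_le {𝕜 : Type*}
    [NontriviallyNormedField 𝕜] {f f' : 𝕜 → 𝕜} {S V : Set 𝕜} {κ : ℝ} (hκ : 0 < κ)
    (hV : IsOpen V) (hVS : V ⊆ f '' S)
    (hlip : ∀ x ∈ S, ∀ y ∈ S, κ * dist x y ≤ dist (f x) (f y))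
    (hf : ∀ z ∈ S, HasDerivAt f (f' z) z) (hf' : ∀ z ∈ S, f' z ≠ 0) :
    ∃ g : 𝕜 → 𝕜, DifferentiableOn 𝕜 g V ∧ MapsTo g V S ∧ ∀ w ∈ V, f (g w) = w := by
  set g := invFunOn f S
  have hgS : MapsTo g V S := fun w hw => invFunOn_mem (hVS hw)
  have hfg : ∀ w ∈ V, f (g w) = w := fun w hw => invFunOn_eq (hVS hw)
  have hg_lip : LipschitzOnWith (Real.toNNReal κ⁻¹) g V := by
    refine LipschitzOnWith.of_dist_le_mul fun w₁ hw₁ w₂ hw₂ => ?_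
    have := hlip _ (hgS hw₁) _ (hgS hw₂)
    rw [hfg w₁ hw₁, hfg w₂ hw₂] at this
    rw [Real.coe_toNNReal _ (inv_nonneg.mpr hκ.le), inv_mul_eq_div, le_div_iff₀ hκ]
    linarith
  refine ⟨g, fun w hw => ?_, hgS, hfg⟩
  have hfg_ev : ∀ᶠ y in 𝓝 w, f (g y) = y := eventually_of_mem (hV.mem_nhds hw) hfg
  exact (HasDerivAt.of_local_left_inverse (hg_lip.continuousOn.continuousAt (hV.mem_nhds hw))
    (hf _ (hgS hw)) (hf' _ (hgS hw)) hfg_ev).differentiableAt.differentiableWithinAt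

theorem exists_rightInverse_of_norm_deriv_le_two_mul {f : ℂ → ℂ} {p : ℂ} {s : ℝ}
    (hf : DifferentiableOn ℂ f (ball p s))
    (hdouble : ∀ z ∈ ball p s, ‖deriv f z‖ ≤ 2 * ‖deriv f p‖) (hp : deriv f p ≠ 0) :
    ∃ g : ℂ → ℂ, DifferentiableOn ℂ g (ball (f p) (‖deriv f p‖ * s / 24)) ∧
      MapsTo g (ball (f p) (‖deriv f p‖ * s / 24)) (ball p s) ∧
      ∀ w ∈ ball (f p) (‖deriv f p‖ * s / 24), f (g w) = w := by
  set m := ‖deriv f p‖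
  have hm : 0 < m := norm_pos_iff.mpr hp
  rcases le_or_gt s 0 with hs | hs
  · rw [ball_eq_empty.mpr (by nlinarith : m * s / 24 ≤ 0)]
    exact ⟨id, differentiableOn_empty, mapsTo_empty _ _, fun _ => False.elim⟩
  have hdisk : closedBall p (s / 6) ⊆ ball p s := closedBall_subset_ball (by linarith)
  have hosc : ∀ z ∈ closedBall p (s / 6), ‖deriv f z - deriv f p‖ ≤ m / 2 := fun z hz => by
    rw [← dist_eq_norm]
    calc dist (deriv f z) (deriv f p) ≤ 3 * m / s * dist z p :=
          dist_le_of_norm_le_two_mul_on_ball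
            (hf.analyticOnNhd isOpen_ball).deriv.differentiableOn hdouble (hdisk hz)
      _ ≤ 3 * m / s * (s / 6) := by gcongr; exact mem_closedBall.mp hz
      _ = m / 2 := by field_simp; ring
  have hderiv : ∀ z ∈ closedBall p (s / 6), HasDerivAt f (deriv f z) z := fun z hz =>
    (hf.differentiableAt (isOpen_ball.mem_nhds (hdisk hz))).hasDerivAt
  have hderiv_ne : ∀ z ∈ closedBall p (s / 6), deriv f z ≠ 0 := fun z hz h => by
    have := hosc z hz
    rw [h, zero_sub, norm_neg] at this
    linarith
  have hlip : ∀ x ∈ closedBall p (s / 6), ∀ y ∈ closedBall p (s / 6),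
      m / 2 * dist x y ≤ dist (f x) (f y) := fun x hx y hy => by
    have := (convex_closedBall p (s / 6)).mul_dist_le_dist_of_norm_deriv_sub_le
      (fun z hz => (hderiv z hz).hasDerivWithinAt) hosc hx hy
    linarith
  have himage : ball (f p) (m * s / 24) ⊆ f '' closedBall p (s / 6) := by
    convert ball_subset_image_closedBall_of_mul_dist_le (by positivity) (half_pos hm)
      (hf.diffContOnCl_ball hdisk) fun z hz => hlip z hz p (mem_closedBall_self (by positivity))
      using 2
    ring
  obtain ⟨g, hg, hg_maps, hfg⟩ := exists_differentiableOn_rightInverse_of_mul_dist_le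
    (half_pos hm) isOpen_ball himage hlip hderiv hderiv_ne
  exact ⟨g, hg, hg_maps.mono_right hdisk, hfg⟩

/-- Bloch's theorem: there is a universal constant θ ∈ (0,1) such that every
holomorphic f : Δ_r(0) → ℂ with |f'(0)| = 1 admits a holomorphic right inverse
g : Δ_{θr}(b) → Δ_r(0) for some b ∈ ℂ. -/
theorem stmt_16 :
    ∃ θ : ℝ, 0 < θ ∧ θ < 1 ∧
      ∀ r : ℝ, 0 < r → ∀ f : ℂ → ℂ,
        DifferentiableOn ℂ f (ball (0 : ℂ) r) →
        ‖deriv f 0‖ = 1 →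
        ∃ b : ℂ, ∃ g : ℂ → ℂ,
          DifferentiableOn ℂ g (ball b (θ * r)) ∧
          MapsTo g (ball b (θ * r)) (ball (0 : ℂ) r) ∧
          ∀ lam ∈ ball b (θ * r), f (g lam) = lam := by
  refine ⟨1 / 96, by norm_num, by norm_num, fun r hr f hf hf₀ => ?_⟩
  obtain ⟨p, hp, hpt, hp_double⟩ := exists_mem_closedBall_le_two_mul_on_ball
    (φ := fun z => ‖deriv f z‖) (c := 0) (R := r / 2) (by positivity)
    ((hf.analyticOnNhd isOpen_ball).deriv.continuousOn.mono
      (closedBall_subset_ball (by linarith))).norm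
    (fun _ _ => norm_nonneg _)
  simp only [hf₀, mul_one] at hpt
  have hp_ne : deriv f p ≠ 0 := fun h => by simp [h] at hpt; linarith
  have hsub : ball p ((r / 2 - dist p 0) / 2) ⊆ ball 0 r := fun z hz => by
    rw [mem_ball] at hz ⊢; linarith [dist_triangle z p 0, mem_closedBall.mp hp]
  obtain ⟨g, hg, hg_maps, hfg⟩ :=
    exists_rightInverse_of_norm_deriv_le_two_mul (hf.mono hsub) hp_double hp_ne
  have hradius : ball (f p) (1 / 96 * r) ⊆
      ball (f p) (‖deriv f p‖ * ((r / 2 - dist p 0) / 2) / 24) :=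
    ball_subset_ball (by nlinarith)
  exact ⟨f p, g, hg.mono hradius, (hg_maps.mono_left hradius).mono_right hsub,
    fun w hw => hfg w (hradius hw)⟩
end

section
/- Let F ⊂ ℂⁿ be a Kobayashi hyperbolic closed region (e.g., satisfying: for each d > 0 there is r(d) > 0 bounding the radius of holomorphic disks it contains). If h : Δ_r(0) → F is holomorphic with ‖h'(0)‖ = 1, then r ≤ r(d). Conversely, if the sublevel set F_d := {(z,w) ∈ ℂ² : Ψ(z,w) < 2d} of the constructed function Ψ has this property for every d > 0, then the rigid domain Ω_Ψ := {(z,w,ζ) ∈ ℂ³ : Re ζ > Ψ(z,w)} is Kobayashi hyperbolic. -/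
open Metric Set

/-! A holomorphic disk `f = (h, ζ) : Δ_r(0) → Ω_Ψ` has `Re ζ > Ψ ≥ 0`, so `ζ` maps into the right
half-plane. The Schwarz lemma applied to the Cayley transform of `ζ` gives `r ‖ζ'(0)‖ ≤ 2 Re ζ(0)`
and `Re ζ ≤ 2 Re ζ(0)` on `Δ_{r/3}(0)`. On that smaller disk `h` therefore stays in the sublevel
set `F_d` as soon as `Re ζ(0) ≤ d`, and property (ℱ), after rescaling, gives `r ‖h'(0)‖ ≤ 3 r(d)`.
Near a point of `Ω_Ψ` one may take `d` fixed, so `r ‖f'(0)‖` is bounded uniformly, which is a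
lower bound for the Kobayashi metric. -/

open ComplexConjugate Topology

lemma norm_sub_lt_norm_add_conj {z a : ℂ} (hz : 0 < z.re) (ha : 0 < a.re) :
    ‖z - a‖ < ‖z + conj a‖ := by
  refine lt_of_pow_lt_pow_left₀ 2 (norm_nonneg _) ?_
  simp only [Complex.sq_norm, Complex.normSq_apply, Complex.sub_re, Complex.sub_im,
    Complex.add_re, Complex.add_im, Complex.conj_re, Complex.conj_im]
  nlinarith [mul_pos hz ha]

lemma re_le_two_mul_re_of_three_mul_norm_sub_le {z a : ℂ} (ha : 0 ≤ a.re)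
    (h : 3 * ‖z - a‖ ≤ ‖z + conj a‖) : z.re ≤ 2 * a.re := by
  have htri : ‖z + conj a‖ ≤ ‖z - a‖ + 2 * a.re := by
    calc ‖z + conj a‖ = ‖(z - a) + ((2 * a.re : ℝ) : ℂ)‖ := by
          rw [← Complex.add_conj a]; ring_nf
      _ ≤ ‖z - a‖ + 2 * a.re := by
          grw [norm_add_le, Complex.norm_real, Real.norm_of_nonneg (by positivity)]
  have hre : z.re - a.re ≤ ‖z - a‖ := by simpa using Complex.re_le_norm (z - a)
  linarith

noncomputable def cayley (a z : ℂ) : ℂ := (z - a) / (z + conj a)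

lemma cayley_self (a : ℂ) : cayley a a = 0 := by simp [cayley]

lemma add_conj_ne_zero {z a : ℂ} (hz : 0 < z.re) (ha : 0 < a.re) : z + conj a ≠ 0 := by
  intro h
  have := congrArg Complex.re h
  simp only [Complex.add_re, Complex.conj_re, Complex.zero_re] at this
  linarith

lemma norm_cayley_lt_one {z a : ℂ} (hz : 0 < z.re) (ha : 0 < a.re) : ‖cayley a z‖ < 1 := by
  have h := norm_sub_lt_norm_add_conj hz ha
  rw [cayley, norm_div, div_lt_one ((norm_nonneg _).trans_lt h)]
  exact h

lemma hasDerivAt_cayley_self {a : ℂ} (ha : 0 < a.re) :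
    HasDerivAt (cayley a) (1 / (2 * a.re : ℝ)) a := by
  have h := ((hasDerivAt_id' a).sub_const a).fun_div ((hasDerivAt_id' a).add_const (conj a))
    (add_conj_ne_zero ha ha)
  have hne : ((2 * a.re : ℝ) : ℂ) ≠ 0 := by exact_mod_cast (by positivity : 2 * a.re ≠ 0)
  refine h.congr_deriv ?_
  rw [sub_self, zero_mul, sub_zero, one_mul, Complex.add_conj]
  field_simp

section HalfPlane

variable {ζ : ℂ → ℂ} {r : ℝ}

lemma differentiableOn_cayley_comp {a : ℂ} {s : Set ℂ} (hζ : DifferentiableOn ℂ ζ s)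
    (hre : ∀ w ∈ s, 0 < (ζ w).re) (ha : 0 < a.re) : DifferentiableOn ℂ (cayley a ∘ ζ) s :=
  (hζ.sub_const a).div (hζ.add_const _) fun w hw => add_conj_ne_zero (hre w hw) ha

lemma mapsTo_cayley_comp {a : ℂ} {s : Set ℂ} (hre : ∀ w ∈ s, 0 < (ζ w).re) (ha : 0 < a.re) :
    MapsTo (cayley a ∘ ζ) s (closedBall 0 1) := fun w hw =>
  mem_closedBall_zero_iff.mpr (norm_cayley_lt_one (hre w hw) ha).le

/-- Schwarz lemma for the right half-plane. -/
theorem norm_deriv_mul_le_of_re_pos (hr : 0 < r) (hζ : DifferentiableOn ℂ ζ (ball 0 r))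
    (hre : ∀ w ∈ ball (0 : ℂ) r, 0 < (ζ w).re) : ‖deriv ζ 0‖ * r ≤ 2 * (ζ 0).re := by
  have h0 : (0 : ℂ) ∈ ball (0 : ℂ) r := mem_ball_self hr
  have ha : 0 < (ζ 0).re := hre 0 h0
  have hderiv : deriv (cayley (ζ 0) ∘ ζ) 0 = deriv ζ 0 / (2 * (ζ 0).re : ℝ) := by
    have := (hasDerivAt_cayley_self ha).comp (0 : ℂ)
      (hζ.differentiableAt (isOpen_ball.mem_nhds h0)).hasDerivAt
    rw [this.deriv]; ring
  have hmaps : MapsTo (cayley (ζ 0) ∘ ζ) (ball 0 r) (closedBall ((cayley (ζ 0) ∘ ζ) 0) 1) := by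
    rw [Function.comp_apply, cayley_self]; exact mapsTo_cayley_comp hre ha
  have := Complex.norm_deriv_le_div_of_mapsTo_ball (differentiableOn_cayley_comp hζ hre ha)
    hmaps hr
  rw [hderiv, norm_div, Complex.norm_real, Real.norm_of_nonneg (by positivity),
    div_le_div_iff₀ (by positivity) hr] at this
  linarith

/-- Harnack's inequality for the right half-plane, on the disk of a third of the radius. -/
theorem re_le_two_mul_re_of_re_pos (hζ : DifferentiableOn ℂ ζ (ball 0 r))
    (hre : ∀ w ∈ ball (0 : ℂ) r, 0 < (ζ w).re) {w : ℂ} (hw : w ∈ ball (0 : ℂ) (r / 3)) :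
    (ζ w).re ≤ 2 * (ζ 0).re := by
  have hr : 0 < r := by linarith [pos_of_mem_ball hw]
  have hw' : w ∈ ball (0 : ℂ) r := ball_subset_ball (by linarith) hw
  have ha : 0 < (ζ 0).re := hre 0 (mem_ball_self hr)
  have hmaps : MapsTo (cayley (ζ 0) ∘ ζ) (ball 0 r) (closedBall ((cayley (ζ 0) ∘ ζ) 0) 1) := by
    rw [Function.comp_apply, cayley_self]; exact mapsTo_cayley_comp hre ha
  have hgw : ‖cayley (ζ 0) (ζ w)‖ ≤ 1 / 3 := by
    have := Complex.dist_le_div_mul_dist_of_mapsTo_ball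
      (differentiableOn_cayley_comp hζ hre ha) hmaps hw'
    rw [Function.comp_apply, Function.comp_apply, cayley_self, dist_zero_right,
      dist_zero_right] at this
    calc ‖cayley (ζ 0) (ζ w)‖ ≤ 1 / r * ‖w‖ := this
      _ ≤ 1 / r * (r / 3) := by gcongr; exact (mem_ball_zero_iff.mp hw).le
      _ = 1 / 3 := by field_simp
  refine re_le_two_mul_re_of_three_mul_norm_sub_le ha.le ?_
  have hne := norm_ne_zero_iff.mpr (add_conj_ne_zero (hre w hw') ha)
  calc 3 * ‖ζ w - ζ 0‖ = 3 * ‖cayley (ζ 0) (ζ w)‖ * ‖ζ w + conj (ζ 0)‖ := by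
        rw [cayley, norm_div]; field_simp
    _ ≤ ‖ζ w + conj (ζ 0)‖ := by nlinarith [norm_nonneg (ζ w + conj (ζ 0))]

end HalfPlane

section DiskRadius

variable {E : Type*} [NormedAddCommGroup E] [NormedSpace ℂ E]

/-- Property (ℱ) of the paper for the single set `F`, with `R` playing the role of `r(d)`. -/
def HolomorphicDiskRadiusLE (F : Set E) (R : ℝ) : Prop :=
  ∀ (r : ℝ) (h : ℂ → E), DifferentiableOn ℂ h (ball 0 r) → ‖deriv h 0‖ = 1 →
    MapsTo h (ball 0 r) F → r ≤ R

theorem HolomorphicDiskRadiusLE.mul_norm_deriv_le {F : Set E} {R r : ℝ} {f : ℂ → E}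
    (hF : HolomorphicDiskRadiusLE F R) (hR : 0 ≤ R) (hf : DifferentiableOn ℂ f (ball 0 r))
    (hmaps : MapsTo f (ball 0 r) F) : r * ‖deriv f 0‖ ≤ R := by
  rcases (norm_nonneg (deriv f 0)).eq_or_lt with h0 | hpos
  · rwa [← h0, mul_zero]
  set c : ℂ := ((‖deriv f 0‖ : ℝ) : ℂ)⁻¹
  have hc : ‖c‖ = ‖deriv f 0‖⁻¹ := by
    rw [norm_inv, Complex.norm_real, Real.norm_of_nonneg hpos.le]
  have hball : MapsTo (c * ·) (ball 0 (r * ‖deriv f 0‖)) (ball 0 r) := fun w hw => by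
    rw [mem_ball_zero_iff] at hw ⊢
    rw [norm_mul, hc, inv_mul_lt_iff₀ hpos, mul_comm]
    exact hw
  refine hF _ (fun w => f (c * w)) (hf.comp (differentiableOn_id.const_mul c) hball)
    ?_ (hmaps.comp hball)
  rw [deriv_comp_mul_left, mul_zero, norm_smul, hc, inv_mul_cancel₀ hpos.ne']

end DiskRadius

lemma UpperSemicontinuous.isOpen_setOf_lt {X : Type*} [TopologicalSpace X] {u g : X → ℝ}
    (hu : UpperSemicontinuous u) (hg : Continuous g) : IsOpen {x | u x < g x} := by
  simpa [Set.preimage, ← sub_eq_add_neg, sub_neg] using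
    (hu.add hg.neg.upperSemicontinuous).isOpen_preimage 0

section Kobayashi

variable {E : Type*} [NormedAddCommGroup E] [NormedSpace ℂ E] {Ω : Set E} {q : E}

lemma exists_linear_disk_of_mem_nhds (hΩ : Ω ∈ 𝓝 q) (v : E) :
    ∃ r > 0, ∃ f : ℂ → E, DifferentiableOn ℂ f (ball 0 r) ∧ f 0 = q ∧ deriv f 0 = v ∧
      MapsTo f (ball 0 r) Ω := by
  obtain ⟨ε, hε, hball⟩ := Metric.mem_nhds_iff.mp hΩ
  have hf : ∀ w : ℂ, HasDerivAt (fun w : ℂ => q + w • v) v w := fun w => by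
    simpa using ((hasDerivAt_id w).smul_const v).const_add q
  refine ⟨ε / (‖v‖ + 1), by positivity, fun w => q + w • v,
    fun w _ => (hf w).differentiableAt.differentiableWithinAt, by simp, (hf 0).deriv,
    fun w hw => hball ?_⟩
  rw [mem_ball_zero_iff, lt_div_iff₀ (by positivity)] at hw
  rw [mem_ball, dist_eq_norm, add_sub_cancel_left, norm_smul]
  nlinarith [norm_nonneg w, norm_nonneg v]

theorem inv_mul_norm_le_kob (hΩ : Ω ∈ 𝓝 q) {v : E} {M : ℝ} (hM : 0 < M)
    (hbound : ∀ (r : ℝ) (f : ℂ → E), 0 < r → DifferentiableOn ℂ f (ball 0 r) → f 0 = q →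
      deriv f 0 = v → MapsTo f (ball 0 r) Ω → r * ‖v‖ ≤ M) :
    M⁻¹ * ‖v‖ ≤ kob Ω q v := by
  refine le_csInf ?_ ?_
  · obtain ⟨r, hr, f, hf⟩ := exists_linear_disk_of_mem_nhds hΩ v
    exact ⟨1 / r, r, hr, rfl, f, hf⟩
  · rintro _ ⟨r, hr, rfl, f, hf, hf0, hfv, hmaps⟩
    rw [inv_mul_le_iff₀ hM, mul_one_div, le_div_iff₀ hr, mul_comm]
    exact hbound r f hr hf hf0 hfv hmaps

end Kobayashi

lemma ContinuousLinearMap.deriv_comp_of_differentiableAt {E F : Type*} [NormedAddCommGroup E]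
    [NormedSpace ℂ E] [NormedAddCommGroup F] [NormedSpace ℂ F] (L : E →L[ℂ] F) {f : ℂ → E}
    {x : ℂ} (hf : DifferentiableAt ℂ f x) : deriv (fun w => L (f w)) x = L (deriv f x) :=
  (L.hasFDerivAt.comp_hasDerivAt x hf.hasDerivAt).deriv

section RigidDomain

noncomputable def baseProj : ℂ × ℂ × ℂ →L[ℂ] ℂ × ℂ :=
  (ContinuousLinearMap.fst ℂ ℂ (ℂ × ℂ)).prod
    ((ContinuousLinearMap.fst ℂ ℂ ℂ).comp (ContinuousLinearMap.snd ℂ ℂ (ℂ × ℂ)))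

noncomputable def fiberProj : ℂ × ℂ × ℂ →L[ℂ] ℂ :=
  (ContinuousLinearMap.snd ℂ ℂ ℂ).comp (ContinuousLinearMap.snd ℂ ℂ (ℂ × ℂ))

@[simp] lemma baseProj_apply (p : ℂ × ℂ × ℂ) : baseProj p = (p.1, p.2.1) := rfl

@[simp] lemma fiberProj_apply (p : ℂ × ℂ × ℂ) : fiberProj p = p.2.2 := rfl

lemma norm_eq_max_norm_baseProj (p : ℂ × ℂ × ℂ) : ‖p‖ = max ‖baseProj p‖ ‖fiberProj p‖ := by
  simp only [baseProj_apply, fiberProj_apply, Prod.norm_def, max_assoc]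

variable {Ψ : ℂ × ℂ → ℝ} {f : ℂ → ℂ × ℂ × ℂ} {r : ℝ}

theorem mapsTo_sublevel_of_mapsTo_rigidDomain (hΨ : ∀ p, 0 ≤ Ψ p)
    (hf : DifferentiableOn ℂ f (ball 0 r))
    (hmaps : MapsTo f (ball 0 r) {p | Ψ (p.1, p.2.1) < p.2.2.re}) :
    MapsTo (baseProj ∘ f) (ball 0 (r / 3)) {p | Ψ p < 2 * (f 0).2.2.re} := fun w hw => by
  have hre : ∀ w ∈ ball (0 : ℂ) r, 0 < (fiberProj (f w)).re :=
    fun w hw => (hΨ _).trans_lt (hmaps hw)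
  have hw' : w ∈ ball (0 : ℂ) r := ball_subset_ball (by linarith [pos_of_mem_ball hw]) hw
  calc Ψ (baseProj (f w)) < (f w).2.2.re := hmaps hw'
    _ ≤ 2 * (f 0).2.2.re :=
      re_le_two_mul_re_of_re_pos (fiberProj.differentiable.comp_differentiableOn hf) hre hw

theorem mul_norm_deriv_le_of_mapsTo_rigidDomain {d R : ℝ} (hΨ : ∀ p, 0 ≤ Ψ p)
    (hF : HolomorphicDiskRadiusLE {p | Ψ p < 2 * d} R) (hR : 0 ≤ R) (hr : 0 < r)
    (hf : DifferentiableOn ℂ f (ball 0 r))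
    (hmaps : MapsTo f (ball 0 r) {p | Ψ (p.1, p.2.1) < p.2.2.re}) (hd : (f 0).2.2.re ≤ d) :
    r * ‖deriv f 0‖ ≤ max (3 * R) (2 * d) := by
  have hf0 : DifferentiableAt ℂ f 0 := hf.differentiableAt (isOpen_ball.mem_nhds (mem_ball_self hr))
  have hbase : r * ‖baseProj (deriv f 0)‖ ≤ 3 * R := by
    have hsub : {p | Ψ p < 2 * (f 0).2.2.re} ⊆ {p | Ψ p < 2 * d} :=
      fun p (hp : Ψ p < _) => show Ψ p < 2 * d by linarith
    have := hF.mul_norm_deriv_le hR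
      ((baseProj.differentiable.comp_differentiableOn hf).mono (ball_subset_ball (by linarith)))
      ((mapsTo_sublevel_of_mapsTo_rigidDomain hΨ hf hmaps).mono_right hsub)
    rw [Function.comp_def, baseProj.deriv_comp_of_differentiableAt hf0] at this
    linarith
  have hfiber : r * ‖fiberProj (deriv f 0)‖ ≤ 2 * d := by
    have := norm_deriv_mul_le_of_re_pos hr (fiberProj.differentiable.comp_differentiableOn hf)
      fun w hw => (hΨ _).trans_lt (hmaps hw)
    rw [Function.comp_def, fiberProj.deriv_comp_of_differentiableAt hf0] at this
    simp only [fiberProj_apply] at this ⊢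
    linarith
  rw [norm_eq_max_norm_baseProj, mul_max_of_nonneg _ _ hr.le]
  exact max_le_max hbase hfiber

end RigidDomain

/-- Property (ℱ) implies hyperbolicity: if Ψ : ℂ² → [0,∞) is a nonnegative
plurisubharmonic function such that for every d > 0 there is r(d) > 0 bounding
the radius of holomorphic disks (with derivative of norm one at the center)
contained in the sublevel set F_d = {Ψ < 2d}, then the rigid domain
Ω_Ψ = {Re ζ > Ψ(z,w)} ⊂ ℂ³ is Kobayashi hyperbolic. -/
theorem stmt_18 (Ψ : ℂ × ℂ → ℝ) (hΨ0 : ∀ p, 0 ≤ Ψ p) (hpsh : PSHOn Ψ Set.univ)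
    (hF : ∀ d : ℝ, 0 < d → ∃ rd : ℝ, 0 < rd ∧
      ∀ r : ℝ, ∀ h : ℂ → ℂ × ℂ,
        DifferentiableOn ℂ h (ball (0 : ℂ) r) →
        ‖deriv h 0‖ = 1 →
        MapsTo h (ball (0 : ℂ) r) {p : ℂ × ℂ | Ψ p < 2 * d} →
        r ≤ rd) :
    KobayashiHyperbolic {p : ℂ × ℂ × ℂ | Ψ (p.1, p.2.1) < p.2.2.re} := by
  have hΩ : IsOpen {p : ℂ × ℂ × ℂ | Ψ (p.1, p.2.1) < p.2.2.re} :=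
    ((upperSemicontinuousOn_univ_iff.mp hpsh.1).comp baseProj.continuous).isOpen_setOf_lt
      (by fun_prop)
  intro p (hp : Ψ (p.1, p.2.1) < p.2.2.re)
  set d := p.2.2.re + 1
  obtain ⟨R, hR, hFR⟩ := hF d (by linarith [hΨ0 (p.1, p.2.1)])
  refine ⟨{q | q.2.2.re < d}, (isOpen_lt (by fun_prop) continuous_const).mem_nhds
    (show p.2.2.re < d from lt_add_one _),
    (max (3 * R) (2 * d))⁻¹, by positivity, ?_⟩
  rintro q ⟨hqd : q.2.2.re < d, hqΩ⟩ v
  refine inv_mul_norm_le_kob (hΩ.mem_nhds hqΩ) (by positivity) fun r f hr hf hf0 hfv hmaps => ?_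
  rw [← hfv]
  exact mul_norm_deriv_le_of_mapsTo_rigidDomain hΨ0 hFR hR.le hr hf hmaps (hf0 ▸ hqd.le)
end
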